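/- arXiv:math/0703483 — 9 statements merged into one kernel-verified Lean document; each statement's English description precedes it below -/
import Mathlib

section
/- Let K be an algebraically closed field, let X = {x_1,…,x_n} be variables, and let U' ⊆ U ⊆ X be subsets of the variables. Let H and T be ideals of K[X], let R' be an ideal of K[U] and R'' an ideal of K[U'], and set H' = (H + T) ∩ K[U]. Assume: (1) V(H + R'^e) \ V(R''^e) ⊆ V(T); (2) V(H + T) ⊆ V(R'^e); and (3) V(H + R'^e) \ V(R''^e) ≠ ∅. Then V(H + R'^e) \ V(R''^e) = V(H + H'^e) \ V(R''^e). -/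
/-!
Write `φ : K[U] → K[X]` for the inclusion. By the Nullstellensatz, (2) puts `R'^e` inside the
radical of `H + T`, so every element of `R'` has a power in `H' = φ⁻¹(H + T)`; hence
`V(H'^e) ⊆ V(R'^e)`, which gives `⊇`. Conversely `H'^e ⊆ H + T`, and on
`V(H + R'^e) \ V(R''^e)` the ideal `T` vanishes by (1), so `H'^e` vanishes there as well.
-/

open MvPolynomial

/-- The affine zero set in `K^n` of an ideal of polynomials. -/
def zeroSet {K : Type*} [CommSemiring K] {σ : Type*} (I : Ideal (MvPolynomial σ K)) :
    Set (σ → K) :=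
  {p | ∀ f ∈ I, MvPolynomial.eval p f = 0}

section ZeroSet

variable {K σ : Type*}

lemma zeroSet_add [CommSemiring K] (I J : Ideal (MvPolynomial σ K)) :
    zeroSet (I + J) = zeroSet I ∩ zeroSet J := by
  ext p
  refine ⟨fun hp => ⟨fun f hf => hp f (Submodule.mem_sup_left hf),
    fun f hf => hp f (Submodule.mem_sup_right hf)⟩, ?_⟩
  rintro ⟨hI, hJ⟩ f hf
  obtain ⟨a, ha, b, hb, rfl⟩ := Submodule.mem_sup.mp hf
  simp [hI a ha, hJ b hb]

lemma zeroSet_anti [CommSemiring K] {I J : Ideal (MvPolynomial σ K)} (h : I ≤ J) :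
    zeroSet J ⊆ zeroSet I :=
  fun _ hp f hf => hp f (h hf)

lemma zeroSet_radical [CommSemiring K] [IsReduced K] (I : Ideal (MvPolynomial σ K)) :
    zeroSet I.radical = zeroSet I := by
  refine (zeroSet_anti Ideal.le_radical).antisymm fun p hp f ⟨k, hk⟩ => ?_
  exact IsNilpotent.eq_zero ⟨k, by simpa using hp _ hk⟩

lemma zeroSet_subset_of_le_radical [CommSemiring K] [IsReduced K]
    {I J : Ideal (MvPolynomial σ K)} (h : J ≤ I.radical) : zeroSet I ⊆ zeroSet J :=
  zeroSet_radical I ▸ zeroSet_anti h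

lemma le_radical_of_zeroSet_subset [Field K] [IsAlgClosed K] [Finite σ]
    {I J : Ideal (MvPolynomial σ K)} (h : zeroSet I ⊆ zeroSet J) : J ≤ I.radical := by
  rw [← vanishingIdeal_zeroLocus_eq_radical (K := K)]
  exact fun f hf p hp => h hp f hf

end ZeroSet

lemma Ideal.map_le_radical_map_comap {A B : Type*} [CommRing A] [CommRing B] (φ : A →+* B)
    {I : Ideal B} {J : Ideal A} (h : J.map φ ≤ I.radical) :
    J.map φ ≤ ((I.comap φ).map φ).radical :=
  calc J.map φ ≤ (I.comap φ).radical.map φ :=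
        Ideal.map_mono (Ideal.comap_radical φ I ▸ Ideal.map_le_iff_le_comap.mp h)
    _ ≤ _ := Ideal.map_radical_le φ

theorem stmt_0_general {K : Type*} [Field K] [IsAlgClosed K] {n : ℕ}
    (U U' : Set (Fin n))
    (H T : Ideal (MvPolynomial (Fin n) K))
    (R' : Ideal (MvPolynomial U K)) (R'' : Ideal (MvPolynomial U' K))
    (H' : Ideal (MvPolynomial U K))
    (hH' : H' = (H + T).comap
      (MvPolynomial.rename (Subtype.val : U → Fin n) : MvPolynomial U K →ₐ[K] _).toRingHom)
    (h1 : zeroSet (H + R'.map (MvPolynomial.rename (Subtype.val : U → Fin n)).toRingHom) \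
            zeroSet (R''.map (MvPolynomial.rename (Subtype.val : U' → Fin n)).toRingHom) ⊆
          zeroSet T)
    (h2 : zeroSet (H + T) ⊆
          zeroSet (R'.map (MvPolynomial.rename (Subtype.val : U → Fin n)).toRingHom)) :
    zeroSet (H + R'.map (MvPolynomial.rename (Subtype.val : U → Fin n)).toRingHom) \
        zeroSet (R''.map (MvPolynomial.rename (Subtype.val : U' → Fin n)).toRingHom) =
      zeroSet (H + H'.map (MvPolynomial.rename (Subtype.val : U → Fin n)).toRingHom) \
        zeroSet (R''.map (MvPolynomial.rename (Subtype.val : U' → Fin n)).toRingHom) := by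
  set φ := (MvPolynomial.rename (Subtype.val : U → Fin n) : MvPolynomial U K →ₐ[K] _).toRingHom
  have hR' : zeroSet (H'.map φ) ⊆ zeroSet (R'.map φ) := hH' ▸ zeroSet_subset_of_le_radical
    (Ideal.map_le_radical_map_comap φ (le_radical_of_zeroSet_subset h2))
  have hT : zeroSet H ∩ zeroSet T ⊆ zeroSet (H'.map φ) := by
    rw [← zeroSet_add]
    exact zeroSet_anti (hH' ▸ Ideal.map_comap_le)
  simp only [zeroSet_add] at h1 ⊢
  ext p
  constructor
  · rintro ⟨⟨hH, hR'p⟩, hR''⟩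
    exact ⟨⟨hH, hT ⟨hH, h1 ⟨⟨hH, hR'p⟩, hR''⟩⟩⟩, hR''⟩
  · rintro ⟨⟨hH, hH'p⟩, hR''⟩
    exact ⟨⟨hH, hR' hH'p⟩, hR''⟩

/-- Proposition: if R' ⊆ K[U], R'' ⊆ K[U'] satisfy the discovery conditions (1)–(3) for
hypotheses H and theses T, and H' = (H + T) ∩ K[U], then
V(H + R'^e) \ V(R''^e) = V(H + H'^e) \ V(R''^e). -/
theorem stmt_0 {K : Type*} [Field K] [IsAlgClosed K] {n : ℕ}
    (U U' : Set (Fin n)) (hUU' : U' ⊆ U)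
    (H T : Ideal (MvPolynomial (Fin n) K))
    (R' : Ideal (MvPolynomial U K)) (R'' : Ideal (MvPolynomial U' K))
    (H' : Ideal (MvPolynomial U K))
    (hH' : H' = (H + T).comap
      (MvPolynomial.rename (Subtype.val : U → Fin n) : MvPolynomial U K →ₐ[K] _).toRingHom)
    (h1 : zeroSet (H + R'.map (MvPolynomial.rename (Subtype.val : U → Fin n)).toRingHom) \
            zeroSet (R''.map (MvPolynomial.rename (Subtype.val : U' → Fin n)).toRingHom) ⊆
          zeroSet T)
    (h2 : zeroSet (H + T) ⊆
          zeroSet (R'.map (MvPolynomial.rename (Subtype.val : U → Fin n)).toRingHom))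
    (h3 : (zeroSet (H + R'.map (MvPolynomial.rename (Subtype.val : U → Fin n)).toRingHom) \
            zeroSet (R''.map (MvPolynomial.rename (Subtype.val : U' → Fin n)).toRingHom)).Nonempty) :
    zeroSet (H + R'.map (MvPolynomial.rename (Subtype.val : U → Fin n)).toRingHom) \
        zeroSet (R''.map (MvPolynomial.rename (Subtype.val : U' → Fin n)).toRingHom) =
      zeroSet (H + H'.map (MvPolynomial.rename (Subtype.val : U → Fin n)).toRingHom) \
        zeroSet (R''.map (MvPolynomial.rename (Subtype.val : U' → Fin n)).toRingHom) :=
  stmt_0_general U U' H T R' R'' H' hH' h1 h2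
end

section
/- Let K be an algebraically closed field, R = K[u_1,…,u_m, x_1,…,x_n], and let H be an ideal of R with H ∩ K[u] = (0) (the variables u are independent for H), and let T ∈ R. Then the contraction (H·R[z] + (T·z − 1)·R[z]) ∩ K[u] is nonzero if and only if T belongs to every minimal prime p over H satisfying p ∩ K[u] = (0); that is, if and only if T vanishes identically on all irreducible components of V(H) where the u-variables remain independent. -/
/-!
By Rabinowitsch's trick the contraction consists of the `a ∈ K[u]` with `T^k a ∈ H` for some `k`.
If `T^k a ∈ H` with `a ≠ 0`, a prime `p ⊇ H` with `p ∩ K[u] = 0` contains `T^k a` but not `a`,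
hence contains `T`. Conversely, the finitely many minimal primes over `H` meeting `K[u]`
nontrivially share a nonzero element `a ∈ K[u]` (the product of one from each). Then `T a` lies
in every minimal prime over `H`, hence in `√H`, and `(T a)^k ∈ H` puts `a^k ≠ 0` in the
contraction.
-/

namespace Polynomial

variable {R : Type*} [CommRing R]

theorem exists_pow_mul_mem_of_C_mem_map_C_add_span {H : Ideal R} {T f : R}
    (hf : C f ∈ H.map C + Ideal.span {C T * X - 1}) : ∃ k : ℕ, T ^ k * f ∈ H := by
  -- `z ↦ T⁻¹` kills `T z - 1`, so the ideal maps into `H R_T`, whose contraction is `H : T^∞`.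
  let S := Localization.Away T
  let φ : R[X] →+* S := eval₂RingHom (algebraMap R S) (IsLocalization.Away.invSelf T)
  have hφC : φ.comp C = algebraMap R S := by ext; simp [φ]
  have hle : H.map C + Ideal.span {C T * X - 1} ≤ (H.map (algebraMap R S)).comap φ := by
    refine sup_le (Ideal.map_le_iff_le_comap.mp ?_) ?_
    · rw [Ideal.map_map, hφC]
    · rw [Ideal.span_singleton_le_iff_mem, Ideal.mem_comap]
      simp [φ, IsLocalization.Away.mul_invSelf]
  have hφf : φ (C f) = algebraMap R S f := RingHom.congr_fun hφC f
  have hmem := hle hf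
  rw [Ideal.mem_comap, hφf,
    IsLocalization.algebraMap_mem_map_algebraMap_iff (Submonoid.powers T)] at hmem
  obtain ⟨_, ⟨k, rfl⟩, hk⟩ := hmem
  exact ⟨k, hk⟩

theorem C_mem_map_C_add_span_of_pow_mul_mem {H : Ideal R} {T f : R} {k : ℕ}
    (hk : T ^ k * f ∈ H) : C f ∈ H.map C + Ideal.span {C T * X - 1} := by
  have hsplit : C f = C (T ^ k * f) * X ^ k - C f * ((C T * X) ^ k - 1) := by
    rw [map_mul, map_pow, mul_pow]
    ring
  rw [hsplit]
  refine sub_mem (Ideal.mem_sup_left (Ideal.mul_mem_right _ _ (Ideal.mem_map_of_mem _ hk)))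
    (Ideal.mem_sup_right (Ideal.mul_mem_left _ _ (Ideal.mem_span_singleton.mpr ?_)))
  have hd := sub_dvd_pow_sub_pow (C T * X) 1 k
  rwa [one_pow] at hd

theorem C_mem_map_C_add_span_C_mul_X_sub_one_iff {H : Ideal R} {T f : R} :
    C f ∈ H.map C + Ideal.span {C T * X - 1} ↔ ∃ k : ℕ, T ^ k * f ∈ H :=
  ⟨exists_pow_mul_mem_of_C_mem_map_C_add_span, fun ⟨_, hk⟩ =>
    C_mem_map_C_add_span_of_pow_mul_mem hk⟩

end Polynomial

namespace Ideal

variable {A B : Type*} [CommRing A] [CommRing B]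

theorem finset_inf_ne_bot [IsDomain A] {ι : Type*} {s : Finset ι} {I : ι → Ideal A}
    (h : ∀ i ∈ s, I i ≠ ⊥) : s.inf I ≠ ⊥ :=
  ne_bot_of_le_ne_bot (Finset.prod_ne_zero_iff.mpr h) prod_le_inf

theorem IsPrime.mem_of_pow_mul_map_mem {ρ : A →+* B} {p : Ideal B} (hp : p.IsPrime)
    (hpρ : p.comap ρ = ⊥) {T : B} {a : A} (ha : a ≠ 0) {k : ℕ} (h : T ^ k * ρ a ∈ p) :
    T ∈ p := by
  have hρa : ρ a ∉ p := fun h => ha (by simpa [← mem_comap, hpρ] using h)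
  exact hp.mem_of_pow_mem k ((hp.mem_or_mem h).resolve_right hρa)

theorem exists_ne_zero_map_mem_minimalPrimes_of_comap_ne_bot [IsDomain A] [IsNoetherianRing B]
    (ρ : A →+* B) (H : Ideal B) :
    ∃ a ≠ 0, ∀ p ∈ H.minimalPrimes, p.comap ρ ≠ ⊥ → ρ a ∈ p := by
  classical
  let bad := H.finite_minimalPrimes_of_isNoetherianRing.toFinset.filter (·.comap ρ ≠ ⊥)
  obtain ⟨a, ha, ha0⟩ := Submodule.exists_mem_ne_zero_of_ne_bot
    (finset_inf_ne_bot (s := bad) (I := (·.comap ρ)) fun p hp => (Finset.mem_filter.mp hp).2)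
  refine ⟨a, ha0, fun p hp hpρ => ?_⟩
  have hpbad : p ∈ bad := Finset.mem_filter.mpr ⟨by simpa using hp, hpρ⟩
  exact SetLike.le_def.mp (Finset.inf_le (f := (·.comap ρ)) hpbad) ha

theorem exists_ne_zero_pow_mul_map_mem_iff [IsDomain A] [IsNoetherianRing B] (ρ : A →+* B)
    (H : Ideal B) (T : B) :
    (∃ a ≠ 0, ∃ k : ℕ, T ^ k * ρ a ∈ H) ↔
      ∀ p ∈ H.minimalPrimes, p.comap ρ = ⊥ → T ∈ p := by
  constructor
  · rintro ⟨a, ha, k, hk⟩ p hp hpρ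
    exact hp.1.1.mem_of_pow_mul_map_mem hpρ ha (hp.1.2 hk)
  · intro hT
    obtain ⟨a, ha0, ha⟩ := exists_ne_zero_map_mem_minimalPrimes_of_comap_ne_bot ρ H
    have hrad : T * ρ a ∈ H.radical := by
      rw [← sInf_minimalPrimes, Submodule.mem_sInf]
      intro p hp
      by_cases hpρ : comap ρ p = ⊥
      · exact mul_mem_right _ _ (hT p hp hpρ)
      · exact mul_mem_left _ _ (ha p hp hpρ)
    obtain ⟨k, hk⟩ := mem_radical_iff.mp hrad
    exact ⟨a ^ k, pow_ne_zero k ha0, k, by rwa [map_pow, ← mul_pow]⟩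

end Ideal

theorem stmt_4_general {K : Type*} [Field K] {m n : ℕ}
    (H : Ideal (MvPolynomial (Fin m ⊕ Fin n) K))
    (T : MvPolynomial (Fin m ⊕ Fin n) K) :
    (H.map (Polynomial.C :
            MvPolynomial (Fin m ⊕ Fin n) K →+* Polynomial (MvPolynomial (Fin m ⊕ Fin n) K)) +
          Ideal.span {Polynomial.C T * Polynomial.X - 1}).comap
        ((Polynomial.C :
            MvPolynomial (Fin m ⊕ Fin n) K →+* Polynomial (MvPolynomial (Fin m ⊕ Fin n) K)).comp
          (MvPolynomial.rename (Sum.inl : Fin m → Fin m ⊕ Fin n)).toRingHom) ≠ ⊥ ↔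
      ∀ p ∈ H.minimalPrimes,
        p.comap (MvPolynomial.rename (Sum.inl : Fin m → Fin m ⊕ Fin n)).toRingHom = ⊥ →
          T ∈ p := by
  rw [← Ideal.exists_ne_zero_pow_mul_map_mem_iff, Submodule.ne_bot_iff]
  simp only [Ideal.mem_comap, RingHom.comp_apply,
    Polynomial.C_mem_map_C_add_span_C_mul_X_sub_one_iff]
  exact exists_congr fun _ => and_comm

/-- With u independent for H (H ∩ K[u] = 0), the saturation contraction
(H·R[z] + (T·z − 1)) ∩ K[u] is nonzero iff T belongs to every minimal prime p over H
with p ∩ K[u] = 0, i.e. T vanishes identically on every irreducible component of V(H)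
on which the u-variables remain independent. -/
theorem stmt_4 {K : Type*} [Field K] [IsAlgClosed K] {m n : ℕ}
    (H : Ideal (MvPolynomial (Fin m ⊕ Fin n) K))
    (T : MvPolynomial (Fin m ⊕ Fin n) K)
    (hind : H.comap (MvPolynomial.rename (Sum.inl : Fin m → Fin m ⊕ Fin n)).toRingHom = ⊥) :
    (H.map (Polynomial.C :
            MvPolynomial (Fin m ⊕ Fin n) K →+* Polynomial (MvPolynomial (Fin m ⊕ Fin n) K)) +
          Ideal.span {Polynomial.C T * Polynomial.X - 1}).comap
        ((Polynomial.C :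
            MvPolynomial (Fin m ⊕ Fin n) K →+* Polynomial (MvPolynomial (Fin m ⊕ Fin n) K)).comp
          (MvPolynomial.rename (Sum.inl : Fin m → Fin m ⊕ Fin n)).toRingHom) ≠ ⊥ ↔
      ∀ p ∈ H.minimalPrimes,
        p.comap (MvPolynomial.rename (Sum.inl : Fin m → Fin m ⊕ Fin n)).toRingHom = ⊥ →
          T ∈ p :=
  stmt_4_general H T
end

section
/- Let K be an algebraically closed field, R = K[u_1,…,u_m, x_1,…,x_n], and let H be an ideal of R with H ∩ K[u] = (0) and with Krull dimension of R/H equal to m (the number of u-variables), and let T ∈ R. Then (H + (T)) ∩ K[u] = (0) if and only if there exists a minimal prime p over H with p ∩ K[u] = (0) and T ∈ p; that is, if and only if T vanishes identically on some irreducible component of V(H) where the u-variables remain independent. -/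
/-!
If `(H + (T)) ∩ K[u] = 0`, some prime `q ⊇ H + (T)` still meets `K[u]` trivially, and a minimal
prime `p ⊆ q` over `H` inherits this. Were `T ∉ p`, then `p ⊊ q`, so `dim R/H ≥ dim R/p > dim R/q`.
But `R/q` is a finitely generated domain containing the polynomial ring `K[u]`, so by Noether
normalization it is integral over some `K[y₁, …, y_s]` with `s = trdeg ≥ m`, and going up gives
`dim R/q ≥ s ≥ m`, contradicting `dim R/H = m`.
-/

open MvPolynomial nonZeroDivisors

universe u v w

theorem ringKrullDim_le_of_isIntegral (R S : Type*) [CommRing R] [CommRing S] [Algebra R S]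
    [Algebra.IsIntegral R S] [FaithfulSMul R S] :
    ringKrullDim R ≤ ringKrullDim S := by
  refine iSup_le fun l => ?_
  obtain ⟨P, -, hP, hPl⟩ := Ideal.exists_ideal_over_prime_of_isIntegral (S := S)
    l.head.asIdeal ⊥ (by rw [← RingHom.ker_eq_comap_bot, (RingHom.injective_iff_ker_eq_bot _).mp
      (FaithfulSMul.algebraMap_injective R S)]; exact bot_le)
  have : P.LiesOver l.head.asIdeal := ⟨hPl.symm⟩
  obtain ⟨L, hL, -, -⟩ := Ideal.exists_ltSeries_of_hasGoingUp l P
  exact_mod_cast hL ▸ Order.LTSeries.length_le_krullDim L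

theorem Algebra.trdeg_eq_of_isIntegral (R : Type u) {S : Type v} {A : Type w} [CommRing R]
    [CommRing S] [CommRing A] [Algebra R S] [Algebra R A] [Algebra S A] [IsScalarTower R S A]
    [Nontrivial R] [NoZeroDivisors A] [FaithfulSMul R S] [FaithfulSMul S A] [Algebra.IsIntegral S A] :
    Cardinal.lift.{v} (Algebra.trdeg R A) = Cardinal.lift.{w} (Algebra.trdeg R S) := by
  have : Nontrivial S := (FaithfulSMul.algebraMap_injective R S).nontrivial
  rw [← lift_trdeg_add_eq R S A, trdeg_eq_zero (R := S) (A := A), Cardinal.lift_zero, add_zero]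

theorem natCast_le_ringKrullDim_of_injective {k A : Type*} [Field k] [CommRing A] [IsDomain A]
    [Algebra k A] [Algebra.FiniteType k A] {m : ℕ} (f : MvPolynomial (Fin m) k →ₐ[k] A)
    (hf : Function.Injective f) : (m : WithBot ℕ∞) ≤ ringKrullDim A := by
  obtain ⟨s, g, hg, hgint⟩ := exists_integral_inj_algHom_of_fg k A
  let := g.toAlgebra
  have : IsScalarTower k (MvPolynomial (Fin s) k) A := .of_algHom g
  have : Algebra.IsIntegral (MvPolynomial (Fin s) k) A := ⟨hgint⟩
  have : FaithfulSMul (MvPolynomial (Fin s) k) A :=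
    (faithfulSMul_iff_algebraMap_injective _ _).mpr hg
  have hms : m ≤ s := by
    have h1 := lift_trdeg_le_of_injective f hf
    have h2 := Algebra.trdeg_eq_of_isIntegral k (S := MvPolynomial (Fin s) k) (A := A)
    simp only [trdeg_of_isDomain, Cardinal.mk_fintype, Fintype.card_fin, Cardinal.lift_natCast,
      Cardinal.nat_le_lift_iff, Cardinal.lift_eq_nat_iff] at h1 h2
    exact_mod_cast h1.trans_eq h2
  calc (m : WithBot ℕ∞) ≤ s := by exact_mod_cast hms
    _ = ringKrullDim (MvPolynomial (Fin s) k) := by simp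
    _ ≤ ringKrullDim A := ringKrullDim_le_of_isIntegral _ _

theorem ringKrullDim_quotient_add_one_le_of_lt {R : Type*} [CommRing R] {p q : Ideal R}
    [p.IsPrime] (hpq : p < q) : ringKrullDim (R ⧸ q) + 1 ≤ ringKrullDim (R ⧸ p) := by
  obtain ⟨t, htq, htp⟩ := SetLike.exists_of_lt hpq
  have ht : Ideal.Quotient.mk p t ∈ (R ⧸ p)⁰ :=
    mem_nonZeroDivisors_of_ne_zero (by rwa [ne_eq, Ideal.Quotient.eq_zero_iff_mem])
  have hle : Ideal.span {Ideal.Quotient.mk p t} ≤ q.map (Ideal.Quotient.mk p) := by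
    rw [Ideal.span_le, Set.singleton_subset_iff]; exact Ideal.mem_map_of_mem _ htq
  calc ringKrullDim (R ⧸ q) + 1
      = ringKrullDim ((R ⧸ p) ⧸ q.map (Ideal.Quotient.mk p)) + 1 := by
        rw [ringKrullDim_eq_of_ringEquiv (DoubleQuot.quotQuotEquivQuotOfLE hpq.le)]
    _ ≤ ringKrullDim ((R ⧸ p) ⧸ Ideal.span {Ideal.Quotient.mk p t}) + 1 := by
        gcongr; exact ringKrullDim_le_of_surjective _ (Ideal.Quotient.factor_surjective hle)
    _ ≤ ringKrullDim (R ⧸ p) := ringKrullDim_quotient_succ_le_of_nonZeroDivisor ht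

theorem Ideal.exists_isPrime_le_comap_eq_bot {A B : Type*} [CommRing A] [IsDomain A] [CommRing B]
    (f : A →+* B) {I : Ideal B} (hI : I.comap f = ⊥) :
    ∃ q : Ideal B, q.IsPrime ∧ I ≤ q ∧ q.comap f = ⊥ := by
  have hdisj : ∀ J : Ideal B, J.comap f = ⊥ ↔ Disjoint (J : Set B) ((A⁰).map f : Set B) := by
    intro J
    simp only [eq_bot_iff, SetLike.le_def, mem_comap, Submodule.mem_bot, Submonoid.coe_map,
      Set.disjoint_left, SetLike.mem_coe, Set.mem_image, mem_nonZeroDivisors_iff_ne_zero, ne_eq,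
      not_exists, not_and]
    exact ⟨fun h _ hb x hx hxb => hx (h (hxb ▸ hb)), fun h x hx => by_contra (h hx x · rfl)⟩
  obtain ⟨q, hq, hIq, hqS⟩ := Ideal.exists_le_prime_disjoint I _ ((hdisj I).mp hI)
  exact ⟨q, hq, hIq, (hdisj q).mpr hqS⟩

theorem stmt_5_general {K : Type*} [Field K] {m n : ℕ}
    (H : Ideal (MvPolynomial (Fin m ⊕ Fin n) K))
    (T : MvPolynomial (Fin m ⊕ Fin n) K)
    (hdim : ringKrullDim (MvPolynomial (Fin m ⊕ Fin n) K ⧸ H) = (m : ℕ)) :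
    (H + Ideal.span {T}).comap
        (MvPolynomial.rename (Sum.inl : Fin m → Fin m ⊕ Fin n)).toRingHom = ⊥ ↔
      ∃ p ∈ H.minimalPrimes,
        p.comap (MvPolynomial.rename (Sum.inl : Fin m → Fin m ⊕ Fin n)).toRingHom = ⊥ ∧
          T ∈ p := by
  constructor
  · intro hc
    obtain ⟨q, hq, hHTq, hqu⟩ := Ideal.exists_isPrime_le_comap_eq_bot _ hc
    obtain ⟨p, hp, hpq⟩ := Ideal.exists_minimalPrimes_le (le_sup_left.trans hHTq)
    refine ⟨p, hp, eq_bot_iff.mpr (hqu ▸ Ideal.comap_mono hpq), ?_⟩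
    by_contra hTp
    have hTq : T ∈ q := hHTq (Ideal.mem_sup_right (Ideal.mem_span_singleton_self T))
    have hpq' : p < q := lt_of_le_of_ne hpq fun h => hTp (h ▸ hTq)
    have hu : Function.Injective ((Ideal.Quotient.mkₐ K q).comp (rename Sum.inl)) :=
      (injective_iff_map_eq_zero _).mpr fun a ha => by
        have : a ∈ q.comap (rename Sum.inl).toRingHom :=
          (Ideal.Quotient.eq_zero_iff_mem (I := q)).mp ha
        rwa [hqu, Ideal.mem_bot] at this
    have := hp.1.1
    have : (m : WithBot ℕ∞) + 1 ≤ m := calc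
      (m : WithBot ℕ∞) + 1 ≤ ringKrullDim (_ ⧸ q) + 1 := by
        gcongr; exact natCast_le_ringKrullDim_of_injective _ hu
      _ ≤ ringKrullDim (_ ⧸ p) := ringKrullDim_quotient_add_one_le_of_lt hpq'
      _ ≤ ringKrullDim (_ ⧸ H) :=
        ringKrullDim_le_of_surjective _ (Ideal.Quotient.factor_surjective hp.1.2)
      _ = m := hdim
    exact absurd this (by norm_cast; omega)
  · rintro ⟨p, hp, hpu, hTp⟩
    exact eq_bot_iff.mpr (hpu ▸ Ideal.comap_mono
      (sup_le hp.1.2 ((Ideal.span_singleton_le_iff_mem _).mpr hTp)))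

/-- With u independent for H and dim R/H = m, we have (H + (T)) ∩ K[u] = 0 iff T vanishes
identically on some irreducible component of V(H) where the u-variables remain
independent, i.e. iff T lies in some minimal prime p over H with p ∩ K[u] = 0. -/
theorem stmt_5 {K : Type*} [Field K] [IsAlgClosed K] {m n : ℕ}
    (H : Ideal (MvPolynomial (Fin m ⊕ Fin n) K))
    (T : MvPolynomial (Fin m ⊕ Fin n) K)
    (hind : H.comap (MvPolynomial.rename (Sum.inl : Fin m → Fin m ⊕ Fin n)).toRingHom = ⊥)
    (hdim : ringKrullDim (MvPolynomial (Fin m ⊕ Fin n) K ⧸ H) = (m : ℕ)) :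
    (H + Ideal.span {T}).comap
        (MvPolynomial.rename (Sum.inl : Fin m → Fin m ⊕ Fin n)).toRingHom = ⊥ ↔
      ∃ p ∈ H.minimalPrimes,
        p.comap (MvPolynomial.rename (Sum.inl : Fin m → Fin m ⊕ Fin n)).toRingHom = ⊥ ∧
          T ∈ p :=
  stmt_5_general H T hdim
end

section
/- For all b, c, d ∈ ℂ, the system of equations x² + b·y² + 2c·x·y + 2d·x = 0, 2x + 2c·y + 2d = 0, 2b·y + 2c·x = 0 has exactly one solution (x, y) ∈ ℂ² if and only if (b = 0 and c ≠ 0) or (d = 0 and b ≠ c²). In other words, the conic x² + b·y² + 2c·x·y + 2d·x = 0 has exactly one singular point if and only if (b = 0 and c ≠ 0) or (d = 0 and b − c² ≠ 0). -/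
/-!
The conic equation is `(x/2)·∂ₓ + (y/2)·∂ᵧ + d·x`, so on the common zeros of the two partial
derivatives it reduces to `d·x = 0`. The singular points are therefore cut out by the linear system
`x + c y + d = 0`, `b y + c x = 0` together with `d x = 0`. If `d ≠ 0` this forces `x = 0`, `c y = -d`
and `b y = 0`, which is solvable only for `b = 0`, `c ≠ 0`, and then uniquely. If `d = 0` the linear
system has determinant `b - c²`: it has only the origin as solution when `b ≠ c²`, and contains the
line through `(-c, 1)` when `b = c²`.
-/

variable {K : Type*} [Field K]

def IsConicSingularPoint (b c d : K) (p : K × K) : Prop :=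
  p.1 ^ 2 + b * p.2 ^ 2 + 2 * c * p.1 * p.2 + 2 * d * p.1 = 0 ∧
    2 * p.1 + 2 * c * p.2 + 2 * d = 0 ∧
    2 * b * p.2 + 2 * c * p.1 = 0

namespace IsConicSingularPoint

variable [NeZero (2 : K)] {b c d : K} {p : K × K}

theorem iff_linear :
    IsConicSingularPoint b c d p ↔
      d * p.1 = 0 ∧ p.1 + c * p.2 + d = 0 ∧ b * p.2 + c * p.1 = 0 := by
  constructor
  · rintro ⟨h_conic, h_dx, h_dy⟩
    have two : (2 : K) ≠ 0 := two_ne_zero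
    exact ⟨mul_left_cancel₀ two (by linear_combination 2 * h_conic - p.1 * h_dx - p.2 * h_dy),
      mul_left_cancel₀ two (by linear_combination h_dx),
      mul_left_cancel₀ two (by linear_combination h_dy)⟩
  · rintro ⟨h_dx, h_lin₁, h_lin₂⟩
    exact ⟨by linear_combination h_dx + p.1 * h_lin₁ + p.2 * h_lin₂,
      by linear_combination 2 * h_lin₁, by linear_combination 2 * h_lin₂⟩

theorem b_eq_zero_and_c_ne_zero (hd : d ≠ 0) (hp : IsConicSingularPoint b c d p) :
    b = 0 ∧ c ≠ 0 := by
  obtain ⟨h_dx, h_lin₁, h_lin₂⟩ := iff_linear.1 hp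
  have hx : p.1 = 0 := (mul_eq_zero.1 h_dx).resolve_left hd
  have hcy : c * p.2 = -d := by linear_combination h_lin₁ - hx
  have hc : c ≠ 0 := left_ne_zero_of_mul (hcy ▸ neg_ne_zero.2 hd)
  have hy : p.2 ≠ 0 := right_ne_zero_of_mul (hcy ▸ neg_ne_zero.2 hd)
  have hby : b * p.2 = 0 := by linear_combination h_lin₂ - c * hx
  exact ⟨(mul_eq_zero.1 hby).resolve_right hy, hc⟩

theorem iff_eq_of_b_eq_zero (hb : b = 0) (hc : c ≠ 0) :
    IsConicSingularPoint b c d p ↔ p = (0, -d / c) := by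
  subst hb
  rw [iff_linear, Prod.ext_iff, eq_div_iff hc]
  constructor
  · rintro ⟨-, h_lin₁, h_lin₂⟩
    have hx : p.1 = 0 := (mul_eq_zero.1 (by linear_combination h_lin₂)).resolve_left hc
    exact ⟨hx, by linear_combination h_lin₁ - hx⟩
  · rintro ⟨hx, hy⟩
    exact ⟨by rw [hx, mul_zero], by linear_combination hx + hy, by rw [hx]; ring⟩

theorem iff_eq_zero_of_d_eq_zero (hd : d = 0) (hbc : b ≠ c ^ 2) :
    IsConicSingularPoint b c d p ↔ p = 0 := by
  subst hd
  rw [iff_linear, Prod.ext_iff, Prod.fst_zero, Prod.snd_zero]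
  constructor
  · rintro ⟨-, h_lin₁, h_lin₂⟩
    have hy : p.2 = 0 := (mul_eq_zero.1 (show (b - c ^ 2) * p.2 = 0 by
      linear_combination h_lin₂ - c * h_lin₁)).resolve_left (sub_ne_zero.2 hbc)
    exact ⟨by linear_combination h_lin₁ - c * hy, hy⟩
  · rintro ⟨hx, hy⟩
    simp [hx, hy]

theorem zero_of_d_eq_zero (hd : d = 0) : IsConicSingularPoint b c d 0 :=
  iff_linear.2 ⟨by simp, by simp [hd], by simp⟩

theorem neg_c_one_of_d_eq_zero (hd : d = 0) (hbc : b = c ^ 2) :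
    IsConicSingularPoint b c d (-c, 1) :=
  iff_linear.2 ⟨by simp [hd], by simp [hd], by simp [hbc]; ring⟩

end IsConicSingularPoint

open IsConicSingularPoint in
/-- For parameters b, c, d ∈ ℂ, the conic x² + b·y² + 2c·x·y + 2d·x = 0 has exactly one
singular point (i.e., the system of the conic together with its two partial derivatives
has exactly one solution) iff (b = 0 ∧ c ≠ 0) ∨ (d = 0 ∧ b ≠ c²). -/
theorem stmt_9 (b c d : ℂ) :
    (∃! p : ℂ × ℂ,
        p.1 ^ 2 + b * p.2 ^ 2 + 2 * c * p.1 * p.2 + 2 * d * p.1 = 0 ∧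
        2 * p.1 + 2 * c * p.2 + 2 * d = 0 ∧
        2 * b * p.2 + 2 * c * p.1 = 0) ↔
      (b = 0 ∧ c ≠ 0) ∨ (d = 0 ∧ b ≠ c ^ 2) := by
  change (∃! p, IsConicSingularPoint b c d p) ↔ _
  constructor
  · rintro ⟨p, hp, h_unique⟩
    by_cases hd : d = 0
    · refine .inr ⟨hd, fun hbc => ?_⟩
      have h_eq : ((-c, 1) : ℂ × ℂ) = 0 :=
        (h_unique _ (neg_c_one_of_d_eq_zero hd hbc)).trans (h_unique _ (zero_of_d_eq_zero hd)).symm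
      simp [Prod.ext_iff] at h_eq
    · exact .inl (b_eq_zero_and_c_ne_zero hd hp)
  · rintro (⟨hb, hc⟩ | ⟨hd, hbc⟩)
    · exact (existsUnique_congr fun _ => iff_eq_of_b_eq_zero hb hc).2 existsUnique_eq
    · exact (existsUnique_congr fun _ => iff_eq_zero_of_d_eq_zero hd hbc).2 existsUnique_eq
end

section
/- Let u1, u2, e1, e2, f1, f2 ∈ ℝ with u2 ≠ 0 and u1 ≠ 2, and suppose: (e1 − 1)·(u1 − e1) + e2·(u2 − e2) = 0; (e1 − 1)² + e2² = 1; u1·f2 − u2·f1 = 0; and f1·e2 − f2·e1 − 2·e2 + 2·f2 = 0. Then (u1 − e1)² + (u2 − e2)² = (u1 − f1)² + (u2 − f2)² if and only if u1 = 0 or u1² + u2² − 2·u1 = 0. (Geometrically: |AE| = |AF| if and only if the point A lies on the y-axis or on the given circle.) -/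
/-!
Tangency and the circle equation give |AE|² = u1² + u2² - 2u1, the power of A. Writing
δ = A × (E - D) = u1 e2 - u2 (e1 - 2), Cramer's rule gives δ • F = 2 e2 • A, hence
δ² |AF|² = (δ - 2 e2)² |A|², and modulo the two tangency equations
δ² (|AF|² - |AE|²) = -2 u1 e2² |AE|². Since δ ≠ 0, and e2 = 0 forces E = C and so u1 = 0,
the distances agree exactly when u1 = 0 or the power of A vanishes.
-/

section TangentConfiguration

variable {u1 u2 e1 e2 f1 f2 : ℝ}

theorem tangent_sq_eq_power (htan : (e1 - 1) * (u1 - e1) + e2 * (u2 - e2) = 0)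
    (hcirc : (e1 - 1) ^ 2 + e2 ^ 2 = 1) :
    (u1 - e1) ^ 2 + (u2 - e2) ^ 2 = u1 ^ 2 + u2 ^ 2 - 2 * u1 := by
  linear_combination (-2) * htan - hcirc

theorem eq_zero_of_tangent_at_axis (hu1 : u1 ≠ 2)
    (htan : (e1 - 1) * (u1 - e1) + e2 * (u2 - e2) = 0)
    (hcirc : (e1 - 1) ^ 2 + e2 ^ 2 = 1) (he2 : e2 = 0) : u1 = 0 := by
  subst he2
  have he1 : e1 * (e1 - 2) = 0 := by linear_combination hcirc
  rcases mul_eq_zero.mp he1 with he1 | he1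
  · linear_combination -htan + (u1 - e1 + 1) * he1
  · exact absurd (by linear_combination htan - (u1 - e1 - 1) * he1) hu1

theorem intersection_mul_cross (hCA : u1 * f2 - u2 * f1 = 0)
    (hDE : f1 * e2 - f2 * e1 - 2 * e2 + 2 * f2 = 0) :
    f1 * (u1 * e2 - u2 * (e1 - 2)) = 2 * e2 * u1 ∧
      f2 * (u1 * e2 - u2 * (e1 - 2)) = 2 * e2 * u2 :=
  ⟨by linear_combination u1 * hDE + (e1 - 2) * hCA, by linear_combination u2 * hDE + e2 * hCA⟩

theorem cross_ne_zero (hu2 : u2 ≠ 0) (hu1 : u1 ≠ 2)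
    (htan : (e1 - 1) * (u1 - e1) + e2 * (u2 - e2) = 0)
    (hcirc : (e1 - 1) ^ 2 + e2 ^ 2 = 1) (hCA : u1 * f2 - u2 * f1 = 0)
    (hDE : f1 * e2 - f2 * e1 - 2 * e2 + 2 * f2 = 0) :
    u1 * e2 - u2 * (e1 - 2) ≠ 0 := by
  intro hδ
  have he2 : e2 = 0 := by
    have h := (intersection_mul_cross hCA hDE).2
    rw [hδ, mul_zero] at h
    simpa [hu2] using h.symm
  have hu10 := eq_zero_of_tangent_at_axis hu1 htan hcirc he2
  subst he2 hu10
  have he1 : e1 = 0 := by linear_combination -htan - hcirc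
  subst he1
  exact hu2 (by linear_combination hδ / 2)

theorem dist_sq_mul_cross_sq (hCA : u1 * f2 - u2 * f1 = 0)
    (hDE : f1 * e2 - f2 * e1 - 2 * e2 + 2 * f2 = 0) :
    ((u1 - f1) ^ 2 + (u2 - f2) ^ 2) * (u1 * e2 - u2 * (e1 - 2)) ^ 2 =
      (u1 * e2 - u2 * (e1 - 2) - 2 * e2) ^ 2 * (u1 ^ 2 + u2 ^ 2) := by
  obtain ⟨h1, h2⟩ := intersection_mul_cross hCA hDE
  set δ := u1 * e2 - u2 * (e1 - 2)
  linear_combination (f1 * δ + 2 * e2 * u1 - 2 * u1 * δ) * h1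
    + (f2 * δ + 2 * e2 * u2 - 2 * u2 * δ) * h2

theorem cross_tangent_identity (htan : (e1 - 1) * (u1 - e1) + e2 * (u2 - e2) = 0)
    (hcirc : (e1 - 1) ^ 2 + e2 ^ 2 = 1) :
    (u1 * e2 - u2 * (e1 - 2) - 2 * e2) ^ 2 * (u1 ^ 2 + u2 ^ 2)
      - (u1 ^ 2 + u2 ^ 2 - 2 * u1) * (u1 * e2 - u2 * (e1 - 2)) ^ 2 =
      -2 * u1 * e2 ^ 2 * (u1 ^ 2 + u2 ^ 2 - 2 * u1) := by
  set δ := u1 * e2 - u2 * (e1 - 2)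
  set q := u1 ^ 2 + u2 ^ 2
  have hee : e2 ^ 2 = e1 * (2 - e1) := by linear_combination hcirc
  have hpolar : e2 * u2 = u1 + e1 * (1 - u1) := by linear_combination htan + hcirc
  have hδe : e2 * δ = (2 - e1) * (u1 + e1) := by
    linear_combination u1 * hee + (2 - e1) * hpolar
  have hδδ : δ ^ 2 = (2 - e1) * ((2 - e1) * q + 2 * u1 * e1) := by
    linear_combination u1 ^ 2 * hee + 2 * u1 * (2 - e1) * hpolar
  linear_combination (-4 * q) * hδe + (4 * q + 2 * u1 * (q - 2 * u1)) * hee + 2 * u1 * hδδ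

end TangentConfiguration

/-- Tangent-from-a-point configuration: with A = (u1,u2) off the x-axis, u1 ≠ 2,
E a tangency point on the circle centered at (1,0) of radius 1, and F the
intersection of line DE (D = (2,0)) with line CA (C = (0,0)), we have |AE| = |AF|
iff A lies on the y-axis or on the circle. -/
theorem stmt_12 (u1 u2 e1 e2 f1 f2 : ℝ) (hu2 : u2 ≠ 0) (hu1 : u1 ≠ 2)
    (htan : (e1 - 1) * (u1 - e1) + e2 * (u2 - e2) = 0)
    (hcirc : (e1 - 1) ^ 2 + e2 ^ 2 = 1)
    (hCA : u1 * f2 - u2 * f1 = 0)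
    (hDE : f1 * e2 - f2 * e1 - 2 * e2 + 2 * f2 = 0) :
    (u1 - e1) ^ 2 + (u2 - e2) ^ 2 = (u1 - f1) ^ 2 + (u2 - f2) ^ 2 ↔
      u1 = 0 ∨ u1 ^ 2 + u2 ^ 2 - 2 * u1 = 0 := by
  have hδ := cross_ne_zero hu2 hu1 htan hcirc hCA hDE
  have hkey := cross_tangent_identity htan hcirc
  rw [← dist_sq_mul_cross_sq hCA hDE] at hkey
  rw [tangent_sq_eq_power htan hcirc]
  set δ := u1 * e2 - u2 * (e1 - 2)
  set p := u1 ^ 2 + u2 ^ 2 - 2 * u1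
  calc p = (u1 - f1) ^ 2 + (u2 - f2) ^ 2
      ↔ ((u1 - f1) ^ 2 + (u2 - f2) ^ 2 - p) * δ ^ 2 = 0 := by
        rw [mul_eq_zero, or_iff_left (pow_ne_zero 2 hδ), sub_eq_zero, eq_comm]
    _ ↔ u1 * e2 ^ 2 * p = 0 := by
        rw [sub_mul, hkey]
        constructor
        · intro h; linear_combination -h / 2
        · intro h; linear_combination -2 * h
    _ ↔ u1 = 0 ∨ p = 0 := by
        by_cases he2 : e2 = 0
        · simp [eq_zero_of_tangent_at_axis hu1 htan hcirc he2]
        · simp [he2]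
end

section
/- For all a, b ∈ ℂ, there exist x, y ∈ ℂ satisfying x² + y² − 1 = 0, −x + 1 − y + a − a·y = 0, and −2y + b + b·x − a·y = 0 if and only if (a = b and (b + 1)² + 1 ≠ 0) or a = −2 or b = a + 2. -/
/-- Solvability of the aligned-points system of Example "Manel":
there exist x, y on the unit circle and on line BC with A, P, D collinear
iff (a = b ∧ (b+1)² + 1 ≠ 0) ∨ a = −2 ∨ b = a + 2. -/
theorem stmt_13 (a b : ℂ) :
    (∃ x y : ℂ,
        x ^ 2 + y ^ 2 - 1 = 0 ∧
        -x + 1 - y + a - a * y = 0 ∧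
        -2 * y + b + b * x - a * y = 0) ↔
      (a = b ∧ (b + 1) ^ 2 + 1 ≠ 0) ∨ a = -2 ∨ b = a + 2 := by
  constructor
  · rintro ⟨x, y, h1, h2, h3⟩
    have hx : x = (1 + a) * (1 - y) := by linear_combination -h2
    subst hx
    by_cases hy : y = 1
    · subst hy
      right; right
      linear_combination h3
    · have hny : (1 : ℂ) - y ≠ 0 := sub_ne_zero.mpr (fun h => hy h.symm)
      have hfac : (1 - y) * ((1 + a) ^ 2 * (1 - y) - (1 + y)) = 0 := by
        linear_combination h1
      have h4 : (1 + a) ^ 2 * (1 - y) - (1 + y) = 0 :=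
        (mul_eq_zero.mp hfac).resolve_left hny
      have hI : ((a + 1) ^ 2 + 1) * y = a * (a + 2) := by linear_combination -h4
      have hII : ((a + 2) + b * (a + 1)) * y = b * (a + 2) := by linear_combination -h3
      have hkey : (a + 2) ^ 2 * (a - b) = 0 := by
        linear_combination ((a + 1) ^ 2 + 1) * hII - ((a + 2) + b * (a + 1)) * hI
      rcases mul_eq_zero.mp hkey with h | h
      · right; left
        have := pow_eq_zero_iff (n := 2) (by norm_num) |>.mp h
        linear_combination this
      · left
        have hab : a = b := by linear_combination h
        subst hab
        refine ⟨rfl, fun h0 => ?_⟩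
        have : (0 : ℂ) = -2 := by linear_combination hI - y * h0 + h0
        norm_num at this
  · rintro (⟨hab, hne⟩ | ha | hb)
    · subst hab
      refine ⟨2 * (1 + a) / ((a + 1) ^ 2 + 1), a * (a + 2) / ((a + 1) ^ 2 + 1), ?_, ?_, ?_⟩ <;>
        field_simp <;> ring
    · subst ha
      exact ⟨-1, 0, by norm_num, by norm_num, by ring⟩
    · subst hb
      exact ⟨0, 1, by ring, by ring, by ring⟩
end

section
/- Let a, b ∈ ℝ and let (x, y) ∈ ℝ² satisfy x² + y² = 1 and −x + 1 − y + a − a·y = 0 (so P = (x, y) lies on the unit circle and on the line through B = (0,1) and C = (1+a, 0)), and assume (x, y) ≠ (0, 1). Then the points A = (−1, 0), P = (x, y) and D = (1+a, b) are collinear (i.e., −2y + b + b·x − a·y = 0) if and only if a = b or a = −2. -/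
/-!
A line through the north pole `(0, 1)` of the unit circle with `x = c (1 - y)` meets the circle
again at the rationally parametrized point `(2c, c² - 1) / (c² + 1)`. With `c = 1 + a`,
substituting this point into the collinearity condition and clearing the positive denominator
`c² + 1` leaves `(a + 2)² (b - a) = 0`.
-/

theorem ne_one_of_sq_add_sq_eq_one {x y : ℝ} (hcirc : x ^ 2 + y ^ 2 = 1)
    (hP : (x, y) ≠ ((0 : ℝ), (1 : ℝ))) : y ≠ 1 := by
  rintro rfl
  have hx : x = 0 := pow_eq_zero_iff two_ne_zero |>.mp (by linarith)
  exact hP (by rw [hx])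

theorem eq_of_sq_add_sq_eq_one_of_eq_mul_one_sub {c x y : ℝ} (hcirc : x ^ 2 + y ^ 2 = 1)
    (hline : x = c * (1 - y)) (hy : y ≠ 1) :
    y * (c ^ 2 + 1) = c ^ 2 - 1 ∧ x * (c ^ 2 + 1) = 2 * c := by
  have hfac : (1 - y) * (y * (c ^ 2 + 1) - (c ^ 2 - 1)) = 0 := by
    linear_combination -hcirc + (x + c * (1 - y)) * hline
  have hy' : y * (c ^ 2 + 1) = c ^ 2 - 1 :=
    sub_eq_zero.mp <| (mul_eq_zero.mp hfac).resolve_left (sub_ne_zero.mpr hy.symm)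
  exact ⟨hy', by linear_combination (c ^ 2 + 1) * hline - c * hy'⟩

/-- Real version: if P = (x,y) lies on the unit circle and on the line through
B = (0,1) and C = (1+a,0), and P ≠ B, then A = (−1,0), P, D = (1+a,b) are collinear
iff a = b or a = −2. -/
theorem stmt_14 (a b x y : ℝ)
    (hcirc : x ^ 2 + y ^ 2 = 1)
    (hline : -x + 1 - y + a - a * y = 0)
    (hP : (x, y) ≠ ((0 : ℝ), (1 : ℝ))) :
    -2 * y + b + b * x - a * y = 0 ↔ a = b ∨ a = -2 := by
  obtain ⟨hy, hx⟩ := eq_of_sq_add_sq_eq_one_of_eq_mul_one_sub (c := 1 + a) hcirc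
    (by linarith) (ne_one_of_sq_add_sq_eq_one hcirc hP)
  have hpos : (0 : ℝ) < (1 + a) ^ 2 + 1 := by positivity
  have key : (-2 * y + b + b * x - a * y) * ((1 + a) ^ 2 + 1) = (a + 2) ^ 2 * (b - a) := by
    linear_combination (-(2 + a)) * hy + b * hx
  rw [← mul_eq_zero_iff_right hpos.ne', key, mul_eq_zero, pow_eq_zero_iff two_ne_zero,
    sub_eq_zero, add_eq_zero_iff_eq_neg, eq_comm (a := b), or_comm]
end

section
/- Let a, b ∈ ℝ with b ≠ 0, and let x2, y2, x3, y3 ∈ ℝ satisfy (a − 1)·y2 − b·(x2 − 1) = 0, (a − 1)·(x2 + 1) + b·y2 = 0, (a + 1)·y3 − b·(x3 + 1) = 0, and (a + 1)·(x3 − 1) + b·y3 = 0. Then (x3 − a)² + y3² = (x2 − a)² + y2² if and only if a = 0 or a² + b² = 1 or a² − b² = 1. (Geometrically: the orthic triangle of the triangle with vertices A = (−1,0), B = (1,0), C = (a,b) is isosceles with |P1P2| = |P1P3| if and only if C lies on the line a = 0, on the circle a² + b² = 1, or on the hyperbola a² − b² = 1.) -/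
/-- Isosceles orthic triangle: for the triangle A = (−1,0), B = (1,0), C = (a,b) with b ≠ 0,
the orthic triangle satisfies |P1P3| = |P1P2| iff a = 0 or a² + b² = 1 or a² − b² = 1. -/
theorem stmt_15 (a b x2 y2 x3 y3 : ℝ) (hb : b ≠ 0)
    (h1 : (a - 1) * y2 - b * (x2 - 1) = 0)
    (h2 : (a - 1) * (x2 + 1) + b * y2 = 0)
    (h3 : (a + 1) * y3 - b * (x3 + 1) = 0)
    (h4 : (a + 1) * (x3 - 1) + b * y3 = 0) :
    (x3 - a) ^ 2 + y3 ^ 2 = (x2 - a) ^ 2 + y2 ^ 2 ↔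
      a = 0 ∨ a ^ 2 + b ^ 2 = 1 ∨ a ^ 2 - b ^ 2 = 1 := by
  set D2 : ℝ := (a - 1) ^ 2 + b ^ 2 with hD2
  set D3 : ℝ := (a + 1) ^ 2 + b ^ 2 with hD3
  have hd2 : D2 ≠ 0 := by positivity
  have hd3 : D3 ≠ 0 := by positivity
  have hx2 : x2 * D2 = b ^ 2 - (a - 1) ^ 2 := by linear_combination (a - 1) * h2 - b * h1
  have hy2 : y2 * D2 = -2 * (a - 1) * b := by linear_combination b * h2 + (a - 1) * h1
  have hx3 : x3 * D3 = (a + 1) ^ 2 - b ^ 2 := by linear_combination (a + 1) * h4 - b * h3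
  have hy3 : y3 * D3 = 2 * (a + 1) * b := by linear_combination (a + 1) * h3 + b * h4
  have e3 : ((x3 - a) ^ 2 + y3 ^ 2) * D3 = (1 + a) ^ 2 * D2 := by
    apply mul_right_cancel₀ hd3
    linear_combination (x3 * D3 - a * D3 + (a + 1) * (1 - a ^ 2 - b ^ 2)) * hx3 +
      (y3 * D3 + 2 * (a + 1) * b) * hy3
  have e2 : ((x2 - a) ^ 2 + y2 ^ 2) * D2 = (1 - a) ^ 2 * D3 := by
    apply mul_right_cancel₀ hd2
    linear_combination (x2 * D2 - a * D2 + (1 - a) * (a ^ 2 + b ^ 2 - 1)) * hx2 +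
      (y2 * D2 - 2 * (a - 1) * b) * hy2
  constructor
  · intro h
    have key : (1 + a) ^ 2 * D2 ^ 2 = (1 - a) ^ 2 * D3 ^ 2 := by
      linear_combination D3 * e2 - D2 * e3 + D2 * D3 * h
    have fact : a * ((a ^ 2 + b ^ 2 - 1) * (a ^ 2 - b ^ 2 - 1)) = 0 := by
      linear_combination (-1/4 : ℝ) * key
    rcases mul_eq_zero.1 fact with h | h
    · exact Or.inl h
    · rcases mul_eq_zero.1 h with h | h
      · exact Or.inr (Or.inl (by linarith))
      · exact Or.inr (Or.inr (by linarith))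
  · intro h
    have key : (1 + a) ^ 2 * D2 ^ 2 = (1 - a) ^ 2 * D3 ^ 2 := by
      rcases h with h | h | h
      · linear_combination (-4 * (a ^ 2 + b ^ 2 - 1) * (a ^ 2 - b ^ 2 - 1)) * h
      · linear_combination (-4 * a * (a ^ 2 - b ^ 2 - 1)) * h
      · linear_combination (-4 * a * (a ^ 2 + b ^ 2 - 1)) * h
    apply mul_right_cancel₀ (mul_ne_zero hd3 hd2)
    linear_combination D2 * e3 - D3 * e2 + key
end

section
/- Let a, b, v, w ∈ ℝ with a + b ≠ 0. Let A = (a + sin v − a·cos v, 1 − cos v − a·sin v), B = (−b + sin w + b·cos w, 1 − cos w + b·sin w), and M = (0, 2). Then A, M and B are collinear if and only if (cos v = cos w and sin v = sin w) or A = M or B = M. (This is the skaters theorem: two points moving on two non-coincident circles through O and M, starting at O and described by equal oriented angles, are always aligned with M.) -/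
/-!
In half-angles, `A - M = 2 (cos (v/2) + a sin (v/2)) • (sin (v/2), -cos (v/2))`, and likewise for
`B - M` with `-b` and `w`. Hence the cross product of `A - M` and `B - M` factors as
`4 (cos (v/2) + a sin (v/2)) (cos (w/2) - b sin (w/2)) sin ((w - v)/2)`: the first two factors
vanish exactly when `A = M`, resp. `B = M`, and the last one exactly when `v ≡ w (mod 2π)`.
-/

open Real

def cross (u v : ℝ × ℝ) : ℝ := u.1 * v.2 - u.2 * v.1

theorem collinear_iff_cross_eq_zero (p q r : ℝ × ℝ) :
    Collinear ℝ ({p, q, r} : Set (ℝ × ℝ)) ↔ cross (p - q) (r - q) = 0 := by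
  constructor
  · intro h
    obtain ⟨d, hd⟩ :=
      (collinear_iff_of_mem (by simp : q ∈ ({p, q, r} : Set (ℝ × ℝ)))).1 h
    obtain ⟨s, rfl⟩ := hd p (by simp)
    obtain ⟨t, rfl⟩ := hd r (by simp)
    simp only [cross, vadd_eq_add, add_sub_cancel_right, Prod.smul_fst, Prod.smul_snd, smul_eq_mul]
    ring
  · intro h
    rcases eq_or_ne r q with rfl | hrq
    · simpa using collinear_pair ℝ p r
    apply collinear_insert_of_mem_affineSpan_pair
    have hn : (r - q).1 ^ 2 + (r - q).2 ^ 2 ≠ 0 := by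
      intro h0
      obtain ⟨h₁, h₂⟩ := (add_eq_zero_iff_of_nonneg (sq_nonneg _) (sq_nonneg _)).1 h0
      exact hrq (sub_eq_zero.1 (Prod.ext (pow_eq_zero_iff two_ne_zero |>.1 h₁)
        (pow_eq_zero_iff two_ne_zero |>.1 h₂)))
    -- the coefficient of the orthogonal projection of `p - q` onto the line spanned by `r - q`
    convert AffineMap.lineMap_mem_affineSpan_pair
      (((p - q).1 * (r - q).1 + (p - q).2 * (r - q).2) / ((r - q).1 ^ 2 + (r - q).2 ^ 2)) q r
    rw [AffineMap.lineMap_apply, eq_vadd_iff_vsub_eq, vsub_eq_sub, vsub_eq_sub]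
    unfold cross at h
    set u := p - q
    set w := r - q
    ext <;> simp only [Prod.smul_fst, Prod.smul_snd, smul_eq_mul] <;> field_simp
    · linear_combination w.2 * h
    · linear_combination -w.1 * h

/-- The origin rotated by the angle `v` around `(a, 1)`. -/
noncomputable def skaterPos (a v : ℝ) : ℝ × ℝ :=
  (a + sin v - a * cos v, 1 - cos v - a * sin v)

theorem skaterPos_sub_top (a v : ℝ) :
    skaterPos a v - (0, 2) =
      (2 * (cos (v / 2) + a * sin (v / 2))) • (sin (v / 2), -cos (v / 2)) := by
  have hv : v = 2 * (v / 2) := by ring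
  have hpyth := sin_sq_add_cos_sq (v / 2)
  rw [skaterPos, hv, sin_two_mul, cos_two_mul', ← hv]
  ext <;> simp only [Prod.fst_sub, Prod.snd_sub, Prod.smul_fst, Prod.smul_snd, smul_eq_mul]
  · linear_combination (-a) * hpyth
  · linear_combination hpyth

theorem skaterPos_eq_top_iff (a v : ℝ) :
    skaterPos a v = (0, 2) ↔ cos (v / 2) + a * sin (v / 2) = 0 := by
  have hne : (sin (v / 2), -cos (v / 2)) ≠ 0 := by
    intro h
    have := sin_sq_add_cos_sq (v / 2)
    simp_all [Prod.ext_iff]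
  rw [← sub_eq_zero, skaterPos_sub_top, smul_eq_zero_iff_left hne]
  simp

theorem cross_skaterPos_sub_top (a b v w : ℝ) :
    cross (skaterPos a v - (0, 2)) (skaterPos b w - (0, 2)) =
      4 * (cos (v / 2) + a * sin (v / 2)) * (cos (w / 2) + b * sin (w / 2)) *
        sin ((w - v) / 2) := by
  rw [skaterPos_sub_top, skaterPos_sub_top, sub_div, sin_sub, cross]
  simp only [Prod.smul_fst, Prod.smul_snd, smul_eq_mul]
  ring

theorem cos_eq_cos_and_sin_eq_sin_iff_sin_half_sub_eq_zero (v w : ℝ) :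
    cos v = cos w ∧ sin v = sin w ↔ sin ((w - v) / 2) = 0 := by
  have hdist : (cos w - cos v) ^ 2 + (sin w - sin v) ^ 2 = 4 * sin ((w - v) / 2) ^ 2 := by
    have hv : v = 2 * (v / 2) := by ring
    have hw : w = 2 * (w / 2) := by ring
    rw [sub_div, sin_sub, hv, hw, sin_two_mul, cos_two_mul', sin_two_mul, cos_two_mul', ← hv,
      ← hw]
    linear_combination (sin (v / 2) ^ 2 + cos (v / 2) ^ 2 - sin (w / 2) ^ 2 - cos (w / 2) ^ 2) *
      (sin_sq_add_cos_sq (v / 2) - sin_sq_add_cos_sq (w / 2))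
  constructor
  · rintro ⟨hc, hs⟩
    rw [hc, hs, sub_self, sub_self] at hdist
    simpa using hdist.symm
  · intro h
    rw [h] at hdist
    obtain ⟨hc, hs⟩ :=
      (add_eq_zero_iff_of_nonneg (sq_nonneg _) (sq_nonneg _)).1 (by simpa using hdist)
    exact ⟨(sub_eq_zero.1 (pow_eq_zero_iff two_ne_zero |>.1 hc)).symm,
      (sub_eq_zero.1 (pow_eq_zero_iff two_ne_zero |>.1 hs)).symm⟩

theorem collinear_skaterPos_iff (a b v w : ℝ) :
    Collinear ℝ ({skaterPos a v, (0, 2), skaterPos b w} : Set (ℝ × ℝ)) ↔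
      (cos v = cos w ∧ sin v = sin w) ∨ skaterPos a v = (0, 2) ∨ skaterPos b w = (0, 2) := by
  rw [collinear_iff_cross_eq_zero, cross_skaterPos_sub_top,
    cos_eq_cos_and_sin_eq_sin_iff_sin_half_sub_eq_zero, skaterPos_eq_top_iff, skaterPos_eq_top_iff]
  simp only [mul_eq_zero, four_ne_zero, false_or]
  tauto

theorem stmt_16_general (a b v w : ℝ) :
    let A : ℝ × ℝ := (a + Real.sin v - a * Real.cos v, 1 - Real.cos v - a * Real.sin v)
    let B : ℝ × ℝ := (-b + Real.sin w + b * Real.cos w, 1 - Real.cos w + b * Real.sin w)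
    let M : ℝ × ℝ := (0, 2)
    Collinear ℝ ({A, M, B} : Set (ℝ × ℝ)) ↔
      (Real.cos v = Real.cos w ∧ Real.sin v = Real.sin w) ∨ A = M ∨ B = M := by
  intro A B M
  have hB : B = skaterPos (-b) w := by simp only [B, skaterPos]; ring_nf
  rw [hB]
  exact collinear_skaterPos_iff a (-b) v w

/-- Skaters theorem: points A and B on two non-coincident circles through O = (0,0)
and M = (0,2), obtained by rotating O around the respective centers by oriented
angles v and w, are collinear with M iff the angles coincide (cos v = cos w and
sin v = sin w) or A = M or B = M. -/
theorem stmt_16 (a b v w : ℝ) (hab : a + b ≠ 0) :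
    let A : ℝ × ℝ := (a + Real.sin v - a * Real.cos v, 1 - Real.cos v - a * Real.sin v)
    let B : ℝ × ℝ := (-b + Real.sin w + b * Real.cos w, 1 - Real.cos w + b * Real.sin w)
    let M : ℝ × ℝ := (0, 2)
    Collinear ℝ ({A, M, B} : Set (ℝ × ℝ)) ↔
      (Real.cos v = Real.cos w ∧ Real.sin v = Real.sin w) ∨ A = M ∨ B = M :=
  stmt_16_general a b v w
end
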